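/- Let Θ₀ ∈ (0,1) and set δ₀ = (1 − Θ₀)/2. Define v : ℝ → ℝ by v(t) = ∫₀^∞ exp(−(s²/4 + t·s − √Θ₀·s)) · s^{δ₀−1} ds. Then v is twice differentiable on ℝ and satisfies, for every t ∈ ℝ, the differential equation −v''(t) + 2(t − √Θ₀)·v'(t) + v(t) = Θ₀·v(t). -/

import Mathlib

/-!
Write `v = M_{δ₀-1}` where `M_r(t) = ∫₀^∞ e^{-(s²/4 + (t-a)s)} s^r ds` and `a = √Θ₀`.
Differentiating under the integral sign gives `M_r' = -M_{r+1}` for `r > -1`, so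
`v' = -M_{δ₀}` and `v'' = M_{δ₀+1}`. Integrating `d/ds (e^{-(s²/4 + (t-a)s)} s^{δ₀})` over `(0, ∞)`,
where both boundary terms vanish because `δ₀ > 0`, yields
`M_{δ₀+1} + 2(t-a) M_{δ₀} = 2δ₀ M_{δ₀-1}`, which is the equation since `2δ₀ = 1 - Θ₀`.
-/

open MeasureTheory

/-- The function `v(t) = ∫₀^∞ e^{−(s²/4 + ts − √Θ₀ s)} s^{δ₀−1} ds`. -/
noncomputable def vFun (Θ₀ δ₀ : ℝ) (t : ℝ) : ℝ :=
  ∫ s in Set.Ioi (0 : ℝ), Real.exp (-(s ^ 2 / 4 + t * s - Real.sqrt Θ₀ * s)) * s ^ (δ₀ - 1)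

open Set Filter Topology Real

noncomputable def gaussWeight (a t s : ℝ) : ℝ := exp (-(s ^ 2 / 4 + t * s - a * s))

noncomputable def gaussMoment (a r t : ℝ) : ℝ := ∫ s in Ioi 0, gaussWeight a t s * s ^ r

lemma vFun_eq_gaussMoment (Θ₀ δ₀ : ℝ) : vFun Θ₀ δ₀ = gaussMoment (√Θ₀) (δ₀ - 1) := rfl

section GaussWeight

variable (a : ℝ)

lemma gaussWeight_pos (t s : ℝ) : 0 < gaussWeight a t s := exp_pos _

lemma continuous_gaussWeight (t : ℝ) : Continuous (gaussWeight a t) := by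
  unfold gaussWeight; fun_prop

lemma gaussWeight_le_exp_neg_sq (t s : ℝ) :
    gaussWeight a t s ≤ exp (2 * (a - t) ^ 2) * exp (-(1 / 8) * s ^ 2) := by
  rw [gaussWeight, ← exp_add, exp_le_exp]
  nlinarith [sq_nonneg (s - 4 * (a - t))]

lemma gaussWeight_le_of_le {t t' s : ℝ} (ht : t' ≤ t) (hs : 0 ≤ s) :
    gaussWeight a t s ≤ gaussWeight a t' s := by
  rw [gaussWeight, gaussWeight, exp_le_exp]
  nlinarith

lemma hasDerivAt_gaussWeight_param (t s : ℝ) :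
    HasDerivAt (fun t ↦ gaussWeight a t s) (-s * gaussWeight a t s) t := by
  have h := ((((hasDerivAt_id t).mul_const s).const_add (s ^ 2 / 4)).sub_const (a * s)).neg.exp
  exact h.congr_deriv (by simp [gaussWeight]; ring)

lemma hasDerivAt_gaussWeight (t s : ℝ) :
    HasDerivAt (gaussWeight a t) (-(s / 2 + t - a) * gaussWeight a t s) s := by
  have h := ((((hasDerivAt_pow 2 s).div_const 4).add ((hasDerivAt_id s).const_mul t)).sub
    ((hasDerivAt_id s).const_mul a)).neg.exp
  exact h.congr_deriv (by simp [gaussWeight]; ring)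

lemma integrableOn_gaussWeight_mul_rpow (t : ℝ) {r : ℝ} (hr : -1 < r) :
    IntegrableOn (fun s ↦ gaussWeight a t s * s ^ r) (Ioi 0) := by
  refine ((integrableOn_rpow_mul_exp_neg_mul_sq (by norm_num : (0 : ℝ) < 1 / 8) hr).const_mul
    (exp (2 * (a - t) ^ 2))).mono' ?_ ?_
  · exact ((continuous_gaussWeight a t).measurable.mul (by fun_prop)).aestronglyMeasurable
  · refine (ae_restrict_iff' measurableSet_Ioi).2 (Eventually.of_forall fun s (hs : 0 < s) ↦ ?_)
    have hsr : 0 ≤ s ^ r := rpow_nonneg hs.le r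
    rw [norm_of_nonneg (mul_nonneg (gaussWeight_pos a t s).le hsr)]
    exact (mul_le_mul_of_nonneg_right (gaussWeight_le_exp_neg_sq a t s) hsr).trans_eq (by ring)

lemma tendsto_gaussWeight_mul_rpow_atTop (t r : ℝ) :
    Tendsto (fun s ↦ gaussWeight a t s * s ^ r) atTop (𝓝 0) := by
  have hdecay := ((tendsto_rpow_abs_mul_exp_neg_mul_sq_cocompact (by norm_num : (0 : ℝ) < 1 / 8)
    r).mono_left atTop_le_cocompact).const_mul (exp (2 * (a - t) ^ 2))
  rw [mul_zero] at hdecay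
  refine squeeze_zero' ?_ ?_ hdecay
  · filter_upwards [eventually_gt_atTop 0] with s hs
    exact mul_nonneg (gaussWeight_pos a t s).le (rpow_nonneg hs.le r)
  · filter_upwards [eventually_gt_atTop 0] with s hs
    rw [abs_of_pos hs]
    exact (mul_le_mul_of_nonneg_right (gaussWeight_le_exp_neg_sq a t s)
      (rpow_nonneg hs.le r)).trans_eq (by ring)

end GaussWeight

section GaussMoment

variable (a : ℝ)

lemma hasDerivAt_gaussMoment {r : ℝ} (hr : -1 < r) (t₀ : ℝ) :
    HasDerivAt (gaussMoment a r) (-gaussMoment a (r + 1) t₀) t₀ := by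
  have hmeas : ∀ t q : ℝ, AEStronglyMeasurable (fun s ↦ gaussWeight a t s * s ^ q)
      (volume.restrict (Ioi 0)) := fun t q ↦
    ((continuous_gaussWeight a t).measurable.mul (by fun_prop)).aestronglyMeasurable
  -- on `|t - t₀| < 1` the derivative in `t` is dominated by the integrand at `t₀ - 1`
  have hdiff := hasDerivAt_integral_of_dominated_loc_of_deriv_le (μ := volume.restrict (Ioi 0))
    (F' := fun t s ↦ -(gaussWeight a t s * s ^ (r + 1)))
    (Metric.ball_mem_nhds t₀ one_pos) (.of_forall fun t ↦ hmeas t r)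
    (integrableOn_gaussWeight_mul_rpow a t₀ hr) (hmeas t₀ (r + 1)).neg ?_
    (integrableOn_gaussWeight_mul_rpow a (t₀ - 1) (by linarith : -1 < r + 1)) ?_
  · have h := hdiff.2
    rwa [integral_neg] at h
  · refine (ae_restrict_iff' measurableSet_Ioi).2 (.of_forall fun s (hs : 0 < s) t ht ↦ ?_)
    have hsr : 0 ≤ s ^ (r + 1) := rpow_nonneg hs.le _
    rw [norm_neg, norm_of_nonneg (mul_nonneg (gaussWeight_pos a t s).le hsr)]
    have ht' : t₀ - 1 ≤ t := by linarith [(abs_lt.1 (Real.dist_eq t t₀ ▸ Metric.mem_ball.1 ht)).1]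
    exact mul_le_mul_of_nonneg_right (gaussWeight_le_of_le a ht' hs.le) hsr
  · refine (ae_restrict_iff' measurableSet_Ioi).2 (.of_forall fun s (hs : 0 < s) t _ ↦ ?_)
    refine ((hasDerivAt_gaussWeight_param a t s).mul_const (s ^ r)).congr_deriv ?_
    rw [rpow_add_one hs.ne']
    ring

lemma gaussMoment_recurrence {r : ℝ} (hr : 0 < r) (t : ℝ) :
    gaussMoment a (r + 1) t + 2 * (t - a) * gaussMoment a r t =
      2 * r * gaussMoment a (r - 1) t := by
  have hint₁ := integrableOn_gaussWeight_mul_rpow a t (by linarith : -1 < r - 1)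
  have hint₂ := integrableOn_gaussWeight_mul_rpow a t (by linarith : -1 < r + 1)
  have hint₃ := integrableOn_gaussWeight_mul_rpow a t (by linarith : -1 < r)
  have hderiv : ∀ s ∈ Ioi (0 : ℝ), HasDerivAt (fun s ↦ gaussWeight a t s * s ^ r)
      (r * (gaussWeight a t s * s ^ (r - 1)) - 2⁻¹ * (gaussWeight a t s * s ^ (r + 1))
        - (t - a) * (gaussWeight a t s * s ^ r)) s := by
    intro s (hs : 0 < s)
    refine ((hasDerivAt_gaussWeight a t s).mul (hasDerivAt_rpow_const (.inl hs.ne'))).congr_deriv ?_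
    rw [rpow_add_one hs.ne']
    ring
  have hcont : ContinuousWithinAt (fun s ↦ gaussWeight a t s * s ^ r) (Ici 0) 0 :=
    ((continuous_gaussWeight a t).continuousAt.mul
      (continuousAt_rpow_const 0 r (.inr hr.le))).continuousWithinAt
  -- the boundary terms vanish: `s ^ r → 0` at `0` and the Gaussian decays at `∞`
  have hibp := integral_Ioi_of_hasDerivAt_of_tendsto hcont hderiv
    (((hint₁.const_mul _).sub (hint₂.const_mul _)).sub (hint₃.const_mul _))
    (tendsto_gaussWeight_mul_rpow_atTop a t r)
  rw [integral_sub ?_ (hint₃.const_mul _), integral_sub (hint₁.const_mul _) (hint₂.const_mul _),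
    integral_const_mul, integral_const_mul, integral_const_mul, zero_rpow hr.ne', mul_zero,
    sub_zero] at hibp
  · unfold gaussMoment
    linarith
  · exact (hint₁.const_mul _).sub (hint₂.const_mul _)

end GaussMoment

/-- with `Θ₀ ∈ (0,1)` and `δ₀ = (1 − Θ₀)/2`, the function `v` is twice
differentiable on `ℝ` and satisfies `−v'' + 2(t − √Θ₀)v' + v = Θ₀ v` for every `t`. -/
theorem vFun_ode (Θ₀ : ℝ) (hΘ : Θ₀ ∈ Set.Ioo (0 : ℝ) 1) :
    ∀ t : ℝ,
      DifferentiableAt ℝ (vFun Θ₀ ((1 - Θ₀) / 2)) t ∧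
      DifferentiableAt ℝ (deriv (vFun Θ₀ ((1 - Θ₀) / 2))) t ∧
      -(deriv (deriv (vFun Θ₀ ((1 - Θ₀) / 2))) t)
          + 2 * (t - Real.sqrt Θ₀) * deriv (vFun Θ₀ ((1 - Θ₀) / 2)) t
          + vFun Θ₀ ((1 - Θ₀) / 2) t
        = Θ₀ * vFun Θ₀ ((1 - Θ₀) / 2) t := by
  intro t
  set δ := (1 - Θ₀) / 2
  have hΘδ : Θ₀ = 1 - 2 * δ := by simp only [δ]; ring
  have hδ : 0 < δ := by linarith [hΘ.2]
  rw [vFun_eq_gaussMoment]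
  have hv' (u : ℝ) : HasDerivAt (gaussMoment √Θ₀ (δ - 1)) (-gaussMoment √Θ₀ δ u) u := by
    simpa using hasDerivAt_gaussMoment √Θ₀ (by linarith : -1 < δ - 1) u
  have hderiv : deriv (gaussMoment √Θ₀ (δ - 1)) = -gaussMoment √Θ₀ δ :=
    funext fun u ↦ (hv' u).deriv
  have hv'' : HasDerivAt (deriv (gaussMoment √Θ₀ (δ - 1))) (gaussMoment √Θ₀ (δ + 1) t) t := by
    rw [hderiv]
    simpa using (hasDerivAt_gaussMoment √Θ₀ (by linarith : -1 < δ) t).neg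
  refine ⟨(hv' t).differentiableAt, hv''.differentiableAt, ?_⟩
  rw [hv''.deriv, (hv' t).deriv]
  linear_combination -gaussMoment_recurrence √Θ₀ hδ t - gaussMoment √Θ₀ (δ - 1) t * hΘδ
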